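/- Let X be a topological space, F_n, F : X → ℝ ∪ {±∞}, and suppose F = Γ-lim F_n (i.e.: (i) for every x and every x_n → x, liminf F_n(x_n) ≥ F(x); (ii) for every x there exist x_n → x with lim F_n(x_n) = F(x)). Suppose x_n* is a minimizer of F_n for each n and x_n* → x*. Then x* is a minimizer of F, and lim_{n→∞} F_n(x_n*) = F(x*). -/
import Mathlib


open Filter Topology

/-- Fundamental theorem of Γ-convergence: if `F = Γ-lim Fₙ` (liminf inequality and
existence of recovery sequences), `xₙ*` minimizes `Fₙ` for each `n`, and `xₙ* → x*`,
then `x*` minimizes `F` and `Fₙ(xₙ*) → F(x*)`. Values are in `ℝ ∪ {±∞}`. -/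
theorem gamma_convergence_of_minimizers (X : Type*) [TopologicalSpace X]
    (F : ℕ → X → EReal) (Flim : X → EReal)
    (hliminf : ∀ (x : X) (xn : ℕ → X), Tendsto xn atTop (𝓝 x) →
      Flim x ≤ liminf (fun n => F n (xn n)) atTop)
    (hrecovery : ∀ x : X, ∃ xn : ℕ → X, Tendsto xn atTop (𝓝 x) ∧
      Tendsto (fun n => F n (xn n)) atTop (𝓝 (Flim x)))
    (xstar : ℕ → X) (hmin : ∀ n, ∀ y : X, F n (xstar n) ≤ F n y)
    (xlim : X) (hconv : Tendsto xstar atTop (𝓝 xlim)) :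
    (∀ y : X, Flim xlim ≤ Flim y) ∧
      Tendsto (fun n => F n (xstar n)) atTop (𝓝 (Flim xlim)) := by
  have key : ∀ y : X, Flim xlim ≤ liminf (fun n => F n (xstar n)) atTop ∧
      limsup (fun n => F n (xstar n)) atTop ≤ Flim y := by
    intro y
    obtain ⟨yn, hyn, hFyn⟩ := hrecovery y
    have h1 := hliminf xlim xstar hconv
    have h2 : limsup (fun n => F n (xstar n)) atTop ≤
        limsup (fun n => F n (yn n)) atTop :=
      limsup_le_limsup (Eventually.of_forall fun n => hmin n (yn n))
    exact ⟨h1, h2.trans_eq hFyn.limsup_eq⟩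
  constructor
  · intro y
    exact ((key y).1.trans (liminf_le_limsup)).trans (key y).2
  · have h1 := (key xlim).1
    have h2 := (key xlim).2
    have := h2.trans (h1.trans liminf_le_limsup)
    exact tendsto_of_liminf_eq_limsup (le_antisymm ((liminf_le_limsup).trans h2) h1) (le_antisymm h2 (h1.trans liminf_le_limsup))
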